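/- Fix positive integers r, n, ε = e^{2πi/r}, and a word w = a₁a₂⋯a_k in letters a_s = z_{i_s,j_s}. Then Σ_{σ ∈ Σ_k} A_{σ·w}(n) = Σ_{partitions B = {B₁,…,B_q} of {1,…,k}} c(B) · A_{[a_i, i∈B₁]}(n) ⋯ A_{[a_i, i∈B_q]}(n), where c(B) = (−1)^{k−q}(|B₁|−1)!⋯(|B_q|−1)!, σ·w = a_{σ⁻¹(1)}⋯a_{σ⁻¹(k)}, and [a_i, i∈B] is the single letter obtained by summing the first subscripts of the a_i for i ∈ B and summing the second subscripts mod r. -/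

import Mathlib

open Finsupp Finset

/-- A letter `z_{i,j}`: first subscript a natural number (positive in intended use),
second subscript in `ℤ/r`. -/
abbrev QLetter (r : ℕ) := ℕ × ZMod r

/-- The Euler algebra `E_r` as a vector space: formal `ℂ`-linear combinations of words. -/
abbrev EulerAlg (r : ℕ) := List (QLetter r) →₀ ℂ

/-- `[a,b]`: add first subscripts, add second subscripts mod `r`. -/
def ladd {r : ℕ} (a b : QLetter r) : QLetter r := (a.1 + b.1, a.2 + b.2)

/-- Quasi-shuffle product of two words, inductively. -/
noncomputable def qmulW {r : ℕ} : List (QLetter r) → List (QLetter r) → EulerAlg r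
  | [], w => Finsupp.single w 1
  | a :: w, [] => Finsupp.single (a :: w) 1
  | a :: w, b :: v =>
      (qmulW w (b :: v)).mapDomain (a :: ·) +
      (qmulW (a :: w) v).mapDomain (b :: ·) +
      (qmulW w v).mapDomain (ladd a b :: ·)
  termination_by w v => w.length + v.length

/-- Bilinear extension of the quasi-shuffle product to `E_r`. -/
noncomputable def qmul {r : ℕ} (x y : EulerAlg r) : EulerAlg r :=
  x.sum fun w c => y.sum fun v d => (c * d) • qmulW w v
noncomputable def eps (r : ℕ) : ℂ := Complex.exp (2 * Real.pi * Complex.I / r)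

/-- `A_w(n)`, the strict multiple harmonic sum coded by the word `w`. -/
noncomputable def Aword (r n : ℕ) : List (QLetter r) → ℂ
  | [] => 1
  | a :: t => ∑ m ∈ Finset.Icc 1 n, eps r ^ (a.2.val * m) / (m : ℂ) ^ a.1 * Aword r (m - 1) t

/-- `S_w(n)`, the weak multiple harmonic sum coded by the word `w`. -/
noncomputable def Sword (r n : ℕ) : List (QLetter r) → ℂ
  | [] => 1
  | a :: t => ∑ m ∈ Finset.Icc 1 n, eps r ^ (a.2.val * m) / (m : ℂ) ^ a.1 * Sword r m t



section PartitionMachinery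

variable {ι : Type*} [DecidableEq ι] {x : ι} {s : Finset ι}

/-- Add `{x}` as a new singleton block. -/
def extP (hx : x ∉ s) (P : Finpartition s) : Finpartition (insert x s) :=
  P.extend (b := {x}) (by simp)
    (by simpa [Finset.disjoint_singleton_right] using hx)
    (by rw [Finset.sup_eq_union, Finset.union_comm, ← Finset.insert_eq])

lemma extP_parts (hx : x ∉ s) (P : Finpartition s) :
    (extP hx P).parts = insert {x} P.parts := rfl

lemma avoid_parts_of_mem (P : Finpartition s) {B : Finset ι} (hB : B ∈ P.parts) :
    (P.avoid B).parts = P.parts.erase B := by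
  ext c
  rw [Finpartition.mem_avoid, mem_erase]
  constructor
  · rintro ⟨d, hd, hdB, rfl⟩
    have hne : d ≠ B := fun h => hdB (h ▸ le_refl _)
    have hdis : Disjoint d B := P.disjoint hd hB hne
    rw [sdiff_eq_self_of_disjoint hdis]
    exact ⟨hne, hd⟩
  · rintro ⟨hne, hc⟩
    have hdis : Disjoint c B := P.disjoint hc hB hne
    refine ⟨c, hc, fun hle => P.ne_bot hc (hdis.eq_bot_of_le hle), sdiff_eq_self_of_disjoint hdis⟩

/-- Merge `x` into the block `B`. -/
def mergeP (hx : x ∉ s) (P : Finpartition s) (B : Finset ι) (hB : B ∈ P.parts) :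
    Finpartition (insert x s) :=
  (P.avoid B).extend (b := insert x B) (by simp)
    (by
      rw [Finset.disjoint_insert_right]
      exact ⟨fun h => hx (mem_sdiff.1 h).1, Finset.sdiff_disjoint⟩)
    (by
      rw [Finset.sup_eq_union, Finset.union_insert, Finset.sdiff_union_of_subset (P.le hB)])

lemma mergeP_parts (hx : x ∉ s) (P : Finpartition s) (B : Finset ι) (hB : B ∈ P.parts) :
    (mergeP hx P B hB).parts = insert (insert x B) (P.parts.erase B) := by
  show insert (insert x B) (P.avoid B).parts = _
  rw [avoid_parts_of_mem P hB]

/-- Remove `x` from a partition of `insert x s`. -/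
def downP (hx : x ∉ s) (P : Finpartition (insert x s)) : Finpartition s :=
  (P.avoid {x}).copy (by rw [← Finset.erase_eq, Finset.erase_insert hx])

lemma mem_downP_parts (hx : x ∉ s) (P : Finpartition (insert x s)) {c : Finset ι} :
    c ∈ (downP hx P).parts ↔ ∃ d ∈ P.parts, ¬d ⊆ {x} ∧ d \ {x} = c := by
  show c ∈ (P.avoid {x}).parts ↔ _
  rw [Finpartition.mem_avoid]

lemma part_mem_of_self (P : Finpartition (insert x s)) : P.part x ∈ P.parts :=
  P.part_mem.2 (mem_insert_self x s)

lemma mem_part_self (P : Finpartition (insert x s)) : x ∈ P.part x :=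
  P.mem_part (mem_insert_self x s)

lemma eq_part_of_mem_x (P : Finpartition (insert x s)) {d : Finset ι}
    (hd : d ∈ P.parts) (hxd : x ∈ d) : d = P.part x :=
  (P.part_eq_of_mem hd hxd).symm

lemma subset_singleton_part (P : Finpartition (insert x s)) {d : Finset ι}
    (hd : d ∈ P.parts) (hsub : d ⊆ {x}) : d = {x} := by
  rcases Finset.subset_singleton_iff.1 hsub with h | h
  · exact absurd h (P.ne_bot hd)
  · exact h

lemma downP_parts_case1 (hx : x ∉ s) (P : Finpartition (insert x s)) (h : P.part x = {x}) :
    (downP hx P).parts = P.parts.erase {x} := by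
  ext c
  rw [mem_downP_parts, mem_erase]
  constructor
  · rintro ⟨d, hd, hdx, rfl⟩
    have hne : d ≠ {x} := fun hh => hdx (hh ▸ le_refl _)
    have hxd : x ∉ d := fun hxd => hne ((eq_part_of_mem_x P hd hxd).trans h)
    rw [sdiff_eq_self_of_disjoint (Finset.disjoint_singleton_right.2 hxd)]
    exact ⟨hne, hd⟩
  · rintro ⟨hne, hc⟩
    have hxd : x ∉ c := fun hxc => hne ((eq_part_of_mem_x P hc hxc).trans h)
    refine ⟨c, hc, fun hsub => hne (subset_singleton_part P hc hsub),
      sdiff_eq_self_of_disjoint (Finset.disjoint_singleton_right.2 hxd)⟩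

lemma downP_parts_case2 (hx : x ∉ s) (P : Finpartition (insert x s)) (h : P.part x ≠ {x}) :
    (downP hx P).parts = insert ((P.part x).erase x) (P.parts.erase (P.part x)) := by
  ext c
  rw [mem_downP_parts, mem_insert, mem_erase]
  constructor
  · rintro ⟨d, hd, hdx, rfl⟩
    by_cases hxd : x ∈ d
    · left; rw [eq_part_of_mem_x P hd hxd, Finset.erase_eq]
    · right
      rw [sdiff_eq_self_of_disjoint (Finset.disjoint_singleton_right.2 hxd)]
      exact ⟨fun hh => hxd (hh ▸ mem_part_self P), hd⟩
  · rintro (rfl | ⟨hne, hc⟩)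
    · refine ⟨P.part x, part_mem_of_self P, fun hsub => h (subset_singleton_part P (part_mem_of_self P) hsub), ?_⟩
      rw [Finset.erase_eq]
    · have hxc : x ∉ c := fun hxc => hne (eq_part_of_mem_x P hc hxc)
      refine ⟨c, hc, fun hsub => ?_, sdiff_eq_self_of_disjoint (Finset.disjoint_singleton_right.2 hxc)⟩
      have hceq : c = {x} := subset_singleton_part P hc hsub
      exact h ((eq_part_of_mem_x P hc (hceq ▸ mem_singleton_self x)).symm.trans hceq)

lemma singleton_x_not_mem (hx : x ∉ s) (P : Finpartition s) : ({x} : Finset ι) ∉ P.parts :=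
  fun h => hx (Finset.singleton_subset_iff.1 (P.le h))

lemma extP_part_x (hx : x ∉ s) (P : Finpartition s) : (extP hx P).part x = {x} :=
  Finpartition.part_eq_of_mem _ (by rw [extP_parts]; exact mem_insert_self _ _) (mem_singleton_self x)

lemma downP_extP (hx : x ∉ s) (P : Finpartition s) : downP hx (extP hx P) = P := by
  ext1
  rw [downP_parts_case1 hx _ (extP_part_x hx P), extP_parts, erase_insert (singleton_x_not_mem hx P)]

lemma mergeP_part_x (hx : x ∉ s) (P : Finpartition s) (B : Finset ι) (hB : B ∈ P.parts) :
    (mergeP hx P B hB).part x = insert x B :=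
  Finpartition.part_eq_of_mem _ (by rw [mergeP_parts]; exact mem_insert_self _ _)
    (mem_insert_self x B)

lemma insertxB_not_mem (hx : x ∉ s) (P : Finpartition s) (B : Finset ι) :
    insert x B ∉ P.parts.erase B :=
  fun h => hx ((P.le (mem_of_mem_erase h)) (mem_insert_self x B))

lemma mergeP_part_x_ne (hx : x ∉ s) (P : Finpartition s) (B : Finset ι) (hB : B ∈ P.parts) :
    (mergeP hx P B hB).part x ≠ {x} := by
  rw [mergeP_part_x]
  intro hh
  have hxB : x ∉ B := fun hxB => hx (P.le hB hxB)
  have : B ⊆ {x} := hh ▸ Finset.subset_insert x B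
  rcases Finset.subset_singleton_iff.1 this with h0 | h0
  · exact P.ne_bot hB h0
  · exact hxB (h0 ▸ mem_singleton_self x)

lemma downP_mergeP (hx : x ∉ s) (P : Finpartition s) (B : Finset ι) (hB : B ∈ P.parts) :
    downP hx (mergeP hx P B hB) = P := by
  have hxB : x ∉ B := fun hxB => hx (P.le hB hxB)
  ext1
  rw [downP_parts_case2 hx _ (mergeP_part_x_ne hx P B hB), mergeP_part_x, mergeP_parts,
    Finset.erase_insert hxB, erase_insert (insertxB_not_mem hx P B), insert_erase hB]

lemma extP_downP (hx : x ∉ s) (P : Finpartition (insert x s)) (h : P.part x = {x}) :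
    extP hx (downP hx P) = P := by
  ext1
  rw [extP_parts, downP_parts_case1 hx P h, insert_erase (h ▸ part_mem_of_self P)]

lemma erase_part_mem_downP (hx : x ∉ s) (P : Finpartition (insert x s)) (h : P.part x ≠ {x}) :
    (P.part x).erase x ∈ (downP hx P).parts := by
  rw [downP_parts_case2 hx P h]
  exact mem_insert_self _ _

lemma erase_part_not_mem_erase (hx : x ∉ s) (P : Finpartition (insert x s)) (h : P.part x ≠ {x}) :
    (P.part x).erase x ∉ P.parts.erase (P.part x) := by
  intro hmem
  have hne : (P.part x).erase x ≠ P.part x := (mem_erase.1 hmem).1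
  have hsub : (P.part x).erase x ⊆ P.part x := Finset.erase_subset _ _
  have hdis : Disjoint ((P.part x).erase x) (P.part x) :=
    P.disjoint (mem_of_mem_erase hmem) (part_mem_of_self P) hne
  exact P.ne_bot (mem_of_mem_erase hmem) (hdis.eq_bot_of_le hsub)

lemma mergeP_downP (hx : x ∉ s) (P : Finpartition (insert x s)) (h : P.part x ≠ {x})
    (hB : (P.part x).erase x ∈ (downP hx P).parts) :
    mergeP hx (downP hx P) ((P.part x).erase x) hB = P := by
  ext1
  rw [mergeP_parts, Finset.insert_erase (mem_part_self P), downP_parts_case2 hx P h,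
    erase_insert (erase_part_not_mem_erase hx P h), insert_erase (part_mem_of_self P)]

lemma sum_finpartition_insert {M : Type*} [AddCommMonoid M] (hx : x ∉ s)
    (F : Finpartition (insert x s) → M) :
    ∑ P : Finpartition (insert x s), F P =
      ∑ P : Finpartition s,
        (F (extP hx P) + ∑ B ∈ P.parts.attach, F (mergeP hx P B.1 B.2)) := by
  classical
  have empty_not_mem : ∀ P : Finpartition s, (∅ : Finset ι) ∉ P.parts := by
    intro P hP; exact P.bot_notMem hP
  have key : ∑ P : Finpartition (insert x s), F P =
      ∑ z ∈ (univ : Finset (Finpartition s)).sigma (fun P => insert ∅ P.parts),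
        (if h : z.2 ∈ z.1.parts then F (mergeP hx z.1 z.2 h) else F (extP hx z.1)) := by
    refine Finset.sum_bij' (fun P _ => ⟨downP hx P, (P.part x).erase x⟩)
      (fun z _ => if h : z.2 ∈ z.1.parts then mergeP hx z.1 z.2 h else extP hx z.1)
      ?_ ?_ ?_ ?_ ?_
    · intro P _
      rw [mem_sigma]
      refine ⟨mem_univ _, ?_⟩
      by_cases h : P.part x = {x}
      · rw [h, Finset.erase_singleton]; exact mem_insert_self _ _
      · exact mem_insert_of_mem (erase_part_mem_downP hx P h)
    · intro z _; exact mem_univ _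
    · intro P _
      dsimp only
      by_cases h : P.part x = {x}
      · have he : (P.part x).erase x = ∅ := by rw [h, Finset.erase_singleton]
        rw [dif_neg (by rw [he]; exact empty_not_mem _), extP_downP hx P h]
      · rw [dif_pos (erase_part_mem_downP hx P h), mergeP_downP hx P h]
    · rintro ⟨P', B⟩ hz
      dsimp only
      rw [mem_sigma, mem_insert] at hz
      rcases hz.2 with rfl | hB
      · rw [dif_neg (empty_not_mem P')]
        have h1 : downP hx (extP hx P') = P' := downP_extP hx P'
        have h2 : ((extP hx P').part x).erase x = ∅ := by
          rw [extP_part_x hx P', Finset.erase_singleton]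
        simp only [h1, h2]
      · rw [dif_pos hB]
        have hxB : x ∉ B := fun hxB => hx (P'.le hB hxB)
        have h1 : downP hx (mergeP hx P' B hB) = P' := downP_mergeP hx P' B hB
        have h2 : ((mergeP hx P' B hB).part x).erase x = B := by
          rw [mergeP_part_x, Finset.erase_insert hxB]
        simp only [h1, h2]
    · intro P _
      dsimp only
      by_cases h : P.part x = {x}
      · have he : (P.part x).erase x = ∅ := by rw [h, Finset.erase_singleton]
        rw [dif_neg (by rw [he]; exact empty_not_mem _), extP_downP hx P h]
      · rw [dif_pos (erase_part_mem_downP hx P h), mergeP_downP hx P h]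
  rw [key, Finset.sum_sigma]
  refine Finset.sum_congr rfl fun P _ => ?_
  rw [Finset.sum_insert (empty_not_mem P), dif_neg (empty_not_mem P)]
  congr 1
  rw [← Finset.sum_attach (P.parts) (fun B => if h : B ∈ P.parts then F (mergeP hx P B h) else F (extP hx P))]
  exact Finset.sum_congr rfl fun B _ => dif_pos B.2

end PartitionMachinery

section InjSum

open Finset

variable {ι : Type*} [DecidableEq ι]

lemma sum_pi_insert {β : Type*} [AddCommMonoid β] {δ : ι → Type*} [∀ i, DecidableEq (δ i)]
    {s : Finset ι} {x : ι} (hx : x ∉ s) (t : ∀ i, Finset (δ i))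
    (f : (∀ i ∈ insert x s, δ i) → β) :
    ∑ q ∈ (insert x s).pi t, f q = ∑ v ∈ t x, ∑ q ∈ s.pi t, f (Finset.Pi.cons s x v q) := by
  rw [Finset.pi_insert hx]
  rw [Finset.sum_biUnion ?hdisj]
  · exact Finset.sum_congr rfl fun v hv =>
      Finset.sum_image fun q1 _ q2 _ h => Finset.Pi.cons_injective hx h
  case hdisj =>
    intro v hv w hw hvw
    simp only [Finset.disjoint_left, mem_image]
    rintro _ ⟨p₂, _, eq₂⟩ ⟨p₃, _, eq₃⟩
    have : Finset.Pi.cons s x v p₂ x (mem_insert_self _ _)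
        = Finset.Pi.cons s x w p₃ x (mem_insert_self _ _) := by rw [eq₂, ← eq₃]
    rw [Finset.Pi.cons_same, Finset.Pi.cons_same] at this
    exact hvw this

/-- The injectivity predicate for a dependent tuple. -/
def injQ (s : Finset ι) (q : ∀ i ∈ s, ℕ) : Prop :=
  ∀ i (hi : i ∈ s), ∀ j (hj : j ∈ s), q i hi = q j hj → i = j

instance (s : Finset ι) (q : ∀ i ∈ s, ℕ) : Decidable (injQ s q) := by
  unfold injQ; infer_instance

/-- Sum over injective tuples. -/
noncomputable def Ip (t : Finset ℕ) (s : Finset ι) (F : ι → ℕ → ℂ) : ℂ :=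
  ∑ q ∈ s.pi fun _ => t,
    if injQ s q then ∏ i ∈ s.attach, F i.1 (q i.1 i.2) else 0

/-- The weight of a block. -/
noncomputable def wB (t : Finset ℕ) (F : ι → ℕ → ℂ) (B : Finset ι) : ℂ :=
  (-1 : ℂ) ^ (B.card - 1) * (Nat.factorial (B.card - 1) : ℂ) * ∑ v ∈ t, ∏ i ∈ B, F i v

/-- Sum over partitions. -/
noncomputable def Pp (t : Finset ℕ) (s : Finset ι) (F : ι → ℕ → ℂ) : ℂ :=
  ∑ P : Finpartition s, ∏ B ∈ P.parts, wB t F B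

lemma Ip_empty (t : Finset ℕ) (F : ι → ℕ → ℂ) : Ip t (∅ : Finset ι) F = 1 := by
  rw [Ip, Finset.pi_empty, Finset.sum_singleton, if_pos, attach_empty, Finset.prod_empty]
  intro i hi
  exact absurd hi (notMem_empty i)

lemma Pp_empty (t : Finset ℕ) (F : ι → ℕ → ℂ) : Pp t (∅ : Finset ι) F = 1 := by
  haveI : Unique (Finpartition (∅ : Finset ι)) := by
    rw [← Finset.bot_eq_empty]; infer_instance
  rw [Pp, Fintype.sum_unique]
  have : (default : Finpartition (∅ : Finset ι)).parts = ∅ := by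
    rw [Finpartition.parts_eq_empty_iff, Finset.bot_eq_empty]
  rw [this, Finset.prod_empty]

lemma Ip_eq_Pp (t : Finset ℕ) : ∀ (s : Finset ι) (F : ι → ℕ → ℂ), Ip t s F = Pp t s F := by
  intro s
  induction s using Finset.induction_on with
  | empty => intro F; rw [Ip_empty, Pp_empty]
  | @insert x s hx ih =>
    intro F
    -- notation
    have hxB : ∀ {B : Finset ι}, B ⊆ s → x ∉ B := fun hBs hxB => hx (hBs hxB)
    -- the product over an updated family
    have prod_upd : ∀ (i : {y // y ∈ s}) (q : ∀ j ∈ s, ℕ),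
        (∏ j ∈ s.attach, (Function.update F i.1 fun v => F i.1 v * F x v) j.1 (q j.1 j.2))
          = F x (q i.1 i.2) * ∏ j ∈ s.attach, F j.1 (q j.1 j.2) := by
      intro i q
      calc (∏ j ∈ s.attach, (Function.update F i.1 fun v => F i.1 v * F x v) j.1 (q j.1 j.2))
          = (Function.update F i.1 fun v => F i.1 v * F x v) i.1 (q i.1 i.2) *
              ∏ j ∈ s.attach.erase i, (Function.update F i.1 fun v => F i.1 v * F x v) j.1 (q j.1 j.2) :=
            (Finset.mul_prod_erase _ _ (mem_attach s i)).symm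
        _ = (F i.1 (q i.1 i.2) * F x (q i.1 i.2)) * ∏ j ∈ s.attach.erase i, F j.1 (q j.1 j.2) := by
            rw [Function.update_self]
            congr 1
            refine Finset.prod_congr rfl fun j hj => ?_
            rw [Function.update_of_ne (fun h => (mem_erase.1 hj).1 (Subtype.ext h))]
        _ = F x (q i.1 i.2) * ∏ j ∈ s.attach, F j.1 (q j.1 j.2) := by
            rw [← Finset.mul_prod_erase s.attach (fun j => F j.1 (q j.1 j.2)) (mem_attach s i)]
            ring
    -- step 1: pointwise identity after splitting off the first variable
    have step1 : ∀ v ∈ t, ∀ q ∈ s.pi (fun _ => t),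
        (if injQ (insert x s) (Finset.Pi.cons s x v q)
          then ∏ i ∈ (insert x s).attach, F i.1 (Finset.Pi.cons s x v q i.1 i.2) else 0)
        = (if injQ s q then F x v * ∏ i ∈ s.attach, F i.1 (q i.1 i.2) else 0)
          - ∑ i ∈ s.attach,
            (if injQ s q then
              (if q i.1 i.2 = v then F x v * ∏ j ∈ s.attach, F j.1 (q j.1 j.2) else 0) else 0) := by
      intro v hv q hq
      have hiff : injQ (insert x s) (Finset.Pi.cons s x v q) ↔
          (injQ s q ∧ ∀ i (hi : i ∈ s), q i hi ≠ v) := by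
        constructor
        · intro H
          refine ⟨fun i hi j hj hqe => ?_, fun i hi hqv => ?_⟩
          · refine H i (mem_insert_of_mem hi) j (mem_insert_of_mem hj) ?_
            rw [Finset.Pi.cons_ne (fun h : x = i => hx (h ▸ hi)),
              Finset.Pi.cons_ne (fun h : x = j => hx (h ▸ hj))]
            exact hqe
          · have heq : Finset.Pi.cons s x v q i (mem_insert_of_mem hi) =
                Finset.Pi.cons s x v q x (mem_insert_self x s) := by
              rw [Finset.Pi.cons_ne (fun h : x = i => hx (h ▸ hi)), Finset.Pi.cons_same]
              exact hqv
            exact hx ((H i (mem_insert_of_mem hi) x (mem_insert_self x s) heq) ▸ hi)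
        · rintro ⟨h1, h2⟩ i hi j hj he
          rcases mem_insert.1 hi with rfl | hi' <;> rcases mem_insert.1 hj with rfl | hj'
          · rfl
          · exfalso
            rw [Finset.Pi.cons_same, Finset.Pi.cons_ne (fun h : i = j => hx (h ▸ hj'))] at he
            exact h2 j hj' he.symm
          · exfalso
            rw [Finset.Pi.cons_same, Finset.Pi.cons_ne (fun h : j = i => hx (h ▸ hi'))] at he
            exact h2 i hi' he
          · refine h1 i hi' j hj' ?_
            rwa [Finset.Pi.cons_ne (fun h : x = i => hx (h ▸ hi')),
              Finset.Pi.cons_ne (fun h : x = j => hx (h ▸ hj'))] at he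
      have hprod : (∏ i ∈ (insert x s).attach, F i.1 (Finset.Pi.cons s x v q i.1 i.2))
          = F x v * ∏ i ∈ s.attach, F i.1 (q i.1 i.2) := by
        rw [attach_insert, Finset.prod_insert, Finset.prod_image]
        · rw [Finset.Pi.cons_same]
          congr 1
          refine Finset.prod_congr rfl fun j _ => ?_
          rw [Finset.Pi.cons_ne (fun h : x = j.1 => hx (h ▸ j.2))]
        · intro a _ b _ h
          rw [Subtype.mk.injEq] at h
          exact Subtype.ext h
        · intro hmem
          rcases Finset.mem_image.1 hmem with ⟨j, _, hj⟩
          rw [Subtype.mk.injEq] at hj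
          exact hx (hj ▸ j.2)
      by_cases h1 : injQ s q
      · by_cases h2 : ∀ i (hi : i ∈ s), q i hi ≠ v
        · rw [if_pos (hiff.2 ⟨h1, h2⟩), hprod, if_pos h1,
            Finset.sum_eq_zero (fun i _ => by rw [if_pos h1, if_neg (h2 i.1 i.2)]), sub_zero]
        · push_neg at h2
          obtain ⟨i₀, hi₀, hqi⟩ := h2
          rw [if_neg (fun hc => ((hiff.1 hc).2 i₀ hi₀) hqi), if_pos h1]
          have hsum : (∑ i ∈ s.attach, (if injQ s q then
              (if q i.1 i.2 = v then F x v * ∏ j ∈ s.attach, F j.1 (q j.1 j.2) else 0) else 0))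
              = F x v * ∏ j ∈ s.attach, F j.1 (q j.1 j.2) := by
            rw [Finset.sum_eq_single_of_mem (⟨i₀, hi₀⟩ : {y // y ∈ s}) (mem_attach s _)]
            · rw [if_pos h1, if_pos hqi]
            · intro j _ hne
              rw [if_pos h1, if_neg]
              intro hqj
              exact hne (Subtype.ext (h1 j.1 j.2 i₀ hi₀ (hqj.trans hqi.symm)))
          rw [hsum, sub_self]
      · rw [if_neg (fun hc => h1 (hiff.1 hc).1), if_neg h1,
          Finset.sum_eq_zero (fun i _ => if_neg h1), sub_zero]
    -- the left-hand side recursion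
    have hL : Ip t (insert x s) F =
        (∑ v ∈ t, F x v) * Ip t s F -
          ∑ i ∈ s.attach, Ip t s (Function.update F i.1 fun v => F i.1 v * F x v) := by
      rw [Ip, sum_pi_insert hx,
        Finset.sum_congr rfl (fun v hv => Finset.sum_congr rfl (fun q hq => step1 v hv q hq)),
        Finset.sum_congr rfl (fun v _ => Finset.sum_sub_distrib _ _), Finset.sum_sub_distrib]
      congr 1
      · rw [Finset.sum_mul]
        refine Finset.sum_congr rfl fun v _ => ?_
        rw [Ip, Finset.mul_sum]
        exact Finset.sum_congr rfl fun q _ => by rw [mul_ite, mul_zero]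
      · rw [Finset.sum_congr rfl (fun v _ => Finset.sum_comm), Finset.sum_comm]
        refine Finset.sum_congr rfl fun i _ => ?_
        rw [Ip, Finset.sum_comm]
        refine Finset.sum_congr rfl fun q hq => ?_
        by_cases hq1 : injQ s q
        · simp only [if_pos hq1]
          rw [Finset.sum_ite_eq t (q i.1 i.2) (fun v => F x v * ∏ j ∈ s.attach, F j.1 (q j.1 j.2)),
            if_pos (Finset.mem_pi.1 hq i.1 i.2), prod_upd i q]
        · simp only [if_neg hq1, Finset.sum_const_zero]
    -- weights of extended partitions
    have hw_ext : ∀ P : Finpartition s, (∏ B ∈ (extP hx P).parts, wB t F B)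
        = (∑ v ∈ t, F x v) * ∏ B ∈ P.parts, wB t F B := by
      intro P
      rw [extP_parts, Finset.prod_insert (singleton_x_not_mem hx P)]
      congr 1
      simp [wB]
    have hw_merge : ∀ (P : Finpartition s) (B : Finset ι) (hB : B ∈ P.parts),
        (∏ C ∈ (mergeP hx P B hB).parts, wB t F C)
        = -((B.card : ℂ) * ((-1 : ℂ) ^ (B.card - 1) * (Nat.factorial (B.card - 1) : ℂ) *
            ∑ v ∈ t, F x v * ∏ i ∈ B, F i v) * ∏ C ∈ P.parts.erase B, wB t F C) := by
      intro P B hB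
      have hxB' : x ∉ B := hxB (P.le hB)
      obtain ⟨m, hm⟩ := Nat.exists_eq_succ_of_ne_zero
        (Nat.pos_iff_ne_zero.1 (Finset.card_pos.2 (P.nonempty_of_mem_parts hB)))
      rw [mergeP_parts, Finset.prod_insert (insertxB_not_mem hx P B)]
      have : wB t F (insert x B) = -((B.card : ℂ) *
          ((-1 : ℂ) ^ (B.card - 1) * (Nat.factorial (B.card - 1) : ℂ) *
            ∑ v ∈ t, F x v * ∏ i ∈ B, F i v)) := by
        rw [wB, Finset.card_insert_of_notMem hxB',
          Finset.sum_congr rfl (fun v _ => Finset.prod_insert hxB'), hm]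
        simp only [Nat.succ_sub_one, Nat.add_sub_cancel]
        rw [pow_succ, Nat.factorial_succ]
        push_cast
        ring
      rw [this]
      ring
    -- grouping the updated sums by blocks
    have hgroup : ∀ P : Finpartition s,
        (∑ i ∈ s.attach, ∏ B ∈ P.parts, wB t (Function.update F i.1 fun v => F i.1 v * F x v) B)
        = ∑ B ∈ P.parts, (B.card : ℂ) * ((-1 : ℂ) ^ (B.card - 1) *
            (Nat.factorial (B.card - 1) : ℂ) * ∑ v ∈ t, F x v * ∏ i ∈ B, F i v) *
            ∏ C ∈ P.parts.erase B, wB t F C := by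
      intro P
      have h0 : (∑ i ∈ s.attach, ∏ B ∈ P.parts, wB t (Function.update F i.1 fun v => F i.1 v * F x v) B)
          = ∑ i ∈ s, ∏ B ∈ P.parts, wB t (Function.update F i fun v => F i v * F x v) B :=
        Finset.sum_attach s
          (fun i : ι => ∏ B ∈ P.parts, wB t (Function.update F i fun v => F i v * F x v) B)
      rw [h0]
      have h1 := (Finset.sum_biUnion (s := P.parts) (t := id)
        (f := fun i => ∏ C ∈ P.parts, wB t (Function.update F i fun v => F i v * F x v) C)
        P.disjoint).symm
      rw [P.biUnion_parts] at h1
      rw [← h1]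
      refine Finset.sum_congr rfl fun B hB => ?_
      simp only [id_eq]
      have hconst : ∀ i ∈ B, (∏ C ∈ P.parts, wB t (Function.update F i fun v => F i v * F x v) C)
          = ((-1 : ℂ) ^ (B.card - 1) * (Nat.factorial (B.card - 1) : ℂ) *
              ∑ v ∈ t, F x v * ∏ j ∈ B, F j v) * ∏ C ∈ P.parts.erase B, wB t F C := by
        intro i hi
        rw [← Finset.mul_prod_erase P.parts _ hB]
        congr 1
        · rw [wB]
          congr 1
          refine Finset.sum_congr rfl fun v _ => ?_
          rw [← Finset.mul_prod_erase B _ hi, Function.update_self,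
            Finset.prod_congr rfl
              (fun j hj => congrFun (Function.update_of_ne (mem_erase.1 hj).1 _ F) v),
            ← Finset.mul_prod_erase B (fun j => F j v) hi]
          ring
        · refine Finset.prod_congr rfl fun C hC => ?_
          have hiC : ∀ j ∈ C, j ≠ i := by
            intro j hj hji
            have hCB : C ≠ B := (mem_erase.1 hC).1
            have := P.disjoint (mem_of_mem_erase hC) hB hCB
            exact Finset.disjoint_left.1 this hj (hji ▸ hi)
          rw [wB, wB]
          congr 1
          refine Finset.sum_congr rfl fun v _ => ?_
          exact Finset.prod_congr rfl fun j hj =>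
            congrFun (Function.update_of_ne (hiC j hj) _ F) v
      rw [Finset.sum_congr rfl hconst, Finset.sum_const, nsmul_eq_mul]
      ring
    -- the right-hand side recursion
    have hR : Pp t (insert x s) F =
        ∑ P : Finpartition s, ((∑ v ∈ t, F x v) * (∏ B ∈ P.parts, wB t F B)
          - ∑ B ∈ P.parts, (B.card : ℂ) * ((-1 : ℂ) ^ (B.card - 1) *
              (Nat.factorial (B.card - 1) : ℂ) * ∑ v ∈ t, F x v * ∏ i ∈ B, F i v) *
              ∏ C ∈ P.parts.erase B, wB t F C) := by
      rw [Pp, sum_finpartition_insert hx (fun P => ∏ B ∈ P.parts, wB t F B)]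
      refine Finset.sum_congr rfl fun P _ => ?_
      have h1 : (∑ B ∈ P.parts.attach, (fun Q : Finpartition (insert x s) => ∏ C ∈ Q.parts, wB t F C) (mergeP hx P B.1 B.2))
          = ∑ B ∈ P.parts.attach, -((B.1.card : ℂ) * ((-1 : ℂ) ^ (B.1.card - 1) *
              (Nat.factorial (B.1.card - 1) : ℂ) * ∑ v ∈ t, F x v * ∏ i ∈ B.1, F i v) *
              ∏ C ∈ P.parts.erase B.1, wB t F C) :=
        Finset.sum_congr rfl fun B _ => hw_merge P B.1 B.2
      have h2 : (∑ B ∈ P.parts.attach, -((B.1.card : ℂ) * ((-1 : ℂ) ^ (B.1.card - 1) *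
              (Nat.factorial (B.1.card - 1) : ℂ) * ∑ v ∈ t, F x v * ∏ i ∈ B.1, F i v) *
              ∏ C ∈ P.parts.erase B.1, wB t F C))
          = ∑ B ∈ P.parts, -((B.card : ℂ) * ((-1 : ℂ) ^ (B.card - 1) *
              (Nat.factorial (B.card - 1) : ℂ) * ∑ v ∈ t, F x v * ∏ i ∈ B, F i v) *
              ∏ C ∈ P.parts.erase B, wB t F C) :=
        Finset.sum_attach P.parts (fun B : Finset ι => -((B.card : ℂ) * ((-1 : ℂ) ^ (B.card - 1) *
              (Nat.factorial (B.card - 1) : ℂ) * ∑ v ∈ t, F x v * ∏ i ∈ B, F i v) *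
              ∏ C ∈ P.parts.erase B, wB t F C))
      rw [hw_ext P, h1, h2, Finset.sum_neg_distrib]
      ring
    -- put everything together
    rw [hL, ih F, Finset.sum_congr rfl
      (fun (i : {y // y ∈ s}) _ => ih (Function.update F i.1 fun v => F i.1 v * F x v)), hR]
    have e1 : (∑ v ∈ t, F x v) * Pp t s F
        = ∑ P : Finpartition s, (∑ v ∈ t, F x v) * ∏ B ∈ P.parts, wB t F B := by
      rw [Pp, Finset.mul_sum]
    have e2 : (∑ i ∈ s.attach, Pp t s (Function.update F i.1 fun v => F i.1 v * F x v))
        = ∑ P : Finpartition s, ∑ B ∈ P.parts, (B.card : ℂ) * ((-1 : ℂ) ^ (B.card - 1) *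
            (Nat.factorial (B.card - 1) : ℂ) * ∑ v ∈ t, F x v * ∏ i ∈ B, F i v) *
            ∏ C ∈ P.parts.erase B, wB t F C := by
      simp only [Pp]
      rw [Finset.sum_comm]
      exact Finset.sum_congr rfl fun P _ => hgroup P
    rw [e1, e2, ← Finset.sum_sub_distrib]

end InjSum

section ASide

open Finset

/-- The single-letter summand. -/
noncomputable def phiL (r : ℕ) (b : QLetter r) (m : ℕ) : ℂ :=
  eps r ^ (b.2.val * m) / (m : ℂ) ^ b.1

lemma Aword_nil (r n : ℕ) : Aword r n [] = 1 := rfl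

lemma Aword_cons (r n : ℕ) (b : QLetter r) (l : List (QLetter r)) :
    Aword r n (b :: l) = ∑ m ∈ Finset.Icc 1 n, phiL r b m * Aword r (m - 1) l := rfl

lemma Aword_single (r n : ℕ) (b : QLetter r) :
    Aword r n [b] = ∑ m ∈ Finset.Icc 1 n, phiL r b m := by
  rw [Aword_cons]
  exact Finset.sum_congr rfl fun m _ => by rw [Aword_nil, mul_one]

lemma eps_pow_r {r : ℕ} (hr : 0 < r) : eps r ^ r = 1 := by
  have hr' : (r : ℂ) ≠ 0 := Nat.cast_ne_zero.2 hr.ne'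
  have h : eps r ^ r = Complex.exp ((2 * Real.pi * Complex.I / r) * r) := by
    rw [eps, ← Complex.exp_nat_mul]
    congr 1
    ring
  rw [h, div_mul_cancel₀ _ hr', Complex.exp_two_pi_mul_I]

lemma eps_pow_congr {r : ℕ} (hr : 0 < r) {u v : ℕ} (h : u % r = v % r) :
    eps r ^ u = eps r ^ v := by
  have key : ∀ w : ℕ, eps r ^ w = eps r ^ (w % r) := by
    intro w
    conv_lhs => rw [← Nat.mod_add_div w r]
    rw [pow_add, pow_mul, eps_pow_r hr, one_pow, mul_one]
  rw [key u, key v, h]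

lemma zmod_val_sum {r k : ℕ} (hr : 0 < r) (B : Finset (Fin k)) (c : Fin k → ZMod r) :
    (∑ i ∈ B, (c i).val) % r = (∑ i ∈ B, c i).val % r := by
  haveI : NeZero r := ⟨hr.ne'⟩
  have hcast : ((∑ i ∈ B, (c i).val : ℕ) : ZMod r) = (((∑ i ∈ B, c i).val : ℕ) : ZMod r) := by
    push_cast [ZMod.natCast_val, ZMod.cast_id]
    rfl
  exact (ZMod.natCast_eq_natCast_iff _ _ _).1 hcast

lemma prod_phiL {r k : ℕ} (hr : 0 < r) (B : Finset (Fin k)) (a : Fin k → QLetter r) (v : ℕ) :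
    (∏ i ∈ B, phiL r (a i) v)
      = phiL r (∑ i ∈ B, (a i).1, ∑ i ∈ B, (a i).2) v := by
  simp only [phiL]
  rw [Finset.prod_div_distrib, Finset.prod_pow_eq_pow_sum, Finset.prod_pow_eq_pow_sum]
  congr 1
  refine eps_pow_congr hr ?_
  rw [← Finset.sum_mul]
  exact Nat.ModEq.mul_right v (zmod_val_sum hr B (fun i => (a i).2))

/-- Expansion of `Aword` over strictly decreasing tuples. -/
lemma Aexpand (r : ℕ) : ∀ (k : ℕ) (g : Fin k → QLetter r) (n : ℕ),
    Aword r n (List.ofFn g) =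
      ∑ p ∈ (Fintype.piFinset fun _ : Fin k => Finset.Icc 1 n).filter
          (fun p => ∀ i j : Fin k, i < j → p j < p i),
        ∏ s, phiL r (g s) (p s) := by
  intro k
  induction k with
  | zero =>
    intro g n
    rw [List.ofFn_zero, Aword_nil, Finset.filter_true_of_mem (fun p _ => fun i => i.elim0)]
    rw [Finset.sum_congr rfl (fun p _ => by rw [Finset.univ_eq_empty, Finset.prod_empty]),
      Finset.sum_const, nsmul_eq_mul, mul_one, Fintype.card_piFinset]
    simp
  | succ k ihk =>
    intro g n
    rw [List.ofFn_succ, Aword_cons,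
      Finset.sum_congr rfl (fun m _ => by rw [ihk (fun i => g i.succ) (m - 1), Finset.mul_sum]),
      Finset.sum_sigma' (Finset.Icc 1 n)
        (fun m => (Fintype.piFinset fun _ : Fin k => Finset.Icc 1 (m - 1)).filter
          (fun p => ∀ i j : Fin k, i < j → p j < p i))
        (fun m p => phiL r (g 0) m * ∏ s, phiL r (g s.succ) (p s))]
    refine Finset.sum_bij' (fun z _ => Fin.cons z.1 z.2) (fun p _ => ⟨p 0, Fin.tail p⟩)
      ?_ ?_ ?_ ?_ ?_
    · rintro ⟨m, p⟩ hz
      dsimp only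
      rw [Finset.mem_sigma] at hz
      obtain ⟨hm, hp⟩ := hz
      rw [Finset.mem_filter] at hp ⊢
      obtain ⟨hp1, hp2⟩ := hp
      rw [Finset.mem_Icc] at hm
      constructor
      · rw [Fintype.mem_piFinset]
        intro i
        refine Fin.cases ?_ ?_ i
        · rw [Fin.cons_zero, Finset.mem_Icc]; exact hm
        · intro j
          rw [Fin.cons_succ, Finset.mem_Icc]
          have := Finset.mem_Icc.1 (Fintype.mem_piFinset.1 hp1 j)
          exact ⟨this.1, this.2.trans ((Nat.sub_le m 1).trans hm.2)⟩
      · intro i j hij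
        rcases Fin.eq_zero_or_eq_succ j with rfl | ⟨j', rfl⟩
        · exact absurd hij (Fin.not_lt_zero i)
        · rcases Fin.eq_zero_or_eq_succ i with rfl | ⟨i', rfl⟩
          · rw [Fin.cons_zero, Fin.cons_succ]
            have h1 := Finset.mem_Icc.1 (Fintype.mem_piFinset.1 hp1 j')
            exact lt_of_le_of_lt h1.2 (Nat.sub_lt (lt_of_lt_of_le one_pos hm.1) one_pos)
          · rw [Fin.cons_succ, Fin.cons_succ]
            exact hp2 i' j' (by rwa [Fin.succ_lt_succ_iff] at hij)
    · intro p hp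
      rw [Finset.mem_filter] at hp
      obtain ⟨hp1, hp2⟩ := hp
      rw [Finset.mem_sigma]
      refine ⟨Fintype.mem_piFinset.1 hp1 0, ?_⟩
      rw [Finset.mem_filter]
      constructor
      · rw [Fintype.mem_piFinset]
        intro j
        have h1 := Finset.mem_Icc.1 (Fintype.mem_piFinset.1 hp1 j.succ)
        rw [Finset.mem_Icc]
        exact ⟨h1.1, Nat.le_sub_one_of_lt (hp2 0 j.succ (Fin.succ_pos j))⟩
      · intro i j hij
        exact hp2 i.succ j.succ (by rwa [Fin.succ_lt_succ_iff])
    · rintro ⟨m, p⟩ _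
      simp [Fin.tail_cons]
    · intro p _
      dsimp only
      exact Fin.cons_self_tail p
    · rintro ⟨m, p⟩ _
      dsimp only
      rw [Fin.prod_univ_succ]
      simp

end ASide

section PermSum

open Finset Equiv

lemma rev_strictAnti (k : ℕ) : StrictAnti (Fin.rev : Fin k → Fin k) :=
  fun _ _ h => Fin.rev_lt_rev.2 h

/-- Sum over permutations of decreasing-tuple sums equals the sum over injective tuples. -/
lemma perm_sum (k n : ℕ) (Φ : Fin k → ℕ → ℂ) :
    (∑ σ : Equiv.Perm (Fin k),
      ∑ p ∈ (Fintype.piFinset fun _ : Fin k => Finset.Icc 1 n).filter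
          (fun p => ∀ i j : Fin k, i < j → p j < p i),
        ∏ s, Φ (σ⁻¹ s) (p s))
    = ∑ q ∈ (Fintype.piFinset fun _ : Fin k => Finset.Icc 1 n).filter
        (fun q => Function.Injective q),
        ∏ s, Φ s (q s) := by
  classical
  rw [Finset.sum_sigma' (univ : Finset (Equiv.Perm (Fin k)))
    (fun _ => (Fintype.piFinset fun _ : Fin k => Finset.Icc 1 n).filter
      (fun p => ∀ i j : Fin k, i < j → p j < p i))
    (fun σ p => ∏ s, Φ (σ⁻¹ s) (p s))]
  refine Finset.sum_bij' (fun z _ => z.2 ∘ z.1)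
    (fun q _ => ⟨(Fin.revPerm.trans (Tuple.sort q))⁻¹, fun s => q (Tuple.sort q (Fin.rev s))⟩)
    ?_ ?_ ?_ ?_ ?_
  · rintro ⟨σ, p⟩ hz
    dsimp only
    rw [Finset.mem_sigma] at hz
    rw [Finset.mem_filter] at hz ⊢
    obtain ⟨-, hp1, hp2⟩ := hz
    constructor
    · rw [Fintype.mem_piFinset] at hp1 ⊢
      exact fun s => hp1 (σ s)
    · have hpanti : StrictAnti p := fun a b h => hp2 a b h
      exact hpanti.injective.comp σ.injective
  · intro q hq
    rw [Finset.mem_filter] at hq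
    obtain ⟨hq1, hq2⟩ := hq
    rw [Finset.mem_sigma, Finset.mem_filter]
    refine ⟨mem_univ _, ?_, ?_⟩
    · rw [Fintype.mem_piFinset] at hq1 ⊢
      exact fun s => hq1 _
    · intro i j hij
      have hmono : StrictMono (q ∘ Tuple.sort q) :=
        (Tuple.monotone_sort q).strictMono_of_injective (hq2.comp (Tuple.sort q).injective)
      exact hmono (Fin.rev_lt_rev.2 hij)
  · rintro ⟨σ, p⟩ hz
    rw [Finset.mem_sigma, Finset.mem_filter] at hz
    obtain ⟨-, hp1, hp2⟩ := hz
    dsimp only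
    set q : Fin k → ℕ := p ∘ σ with hq
    have hpanti : StrictAnti p := fun a b h => hp2 a b h
    have hpinj : Function.Injective p := hpanti.injective
    have hqinj : Function.Injective q := hpinj.comp σ.injective
    have hm1 : Monotone (q ∘ (Fin.revPerm.trans (Fin.revPerm.trans (Tuple.sort q)) : Equiv.Perm (Fin k))) := by
      have he : (q ∘ (Fin.revPerm.trans (Fin.revPerm.trans (Tuple.sort q)) : Equiv.Perm (Fin k)))
          = q ∘ Tuple.sort q := by
        funext u
        simp [Equiv.trans_apply, Fin.rev_rev]
      rw [he]
      exact Tuple.monotone_sort q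
    have hm2 : Monotone (q ∘ (Fin.revPerm.trans σ⁻¹ : Equiv.Perm (Fin k))) := by
      have he : (q ∘ (Fin.revPerm.trans σ⁻¹ : Equiv.Perm (Fin k))) = p ∘ Fin.rev := by
        funext u
        simp [hq, Equiv.trans_apply, Equiv.apply_symm_apply]
      rw [he]
      exact (hpanti.comp (rev_strictAnti k)).monotone
    have heqfun := Tuple.unique_monotone hm1 hm2
    have hperm : (Fin.revPerm.trans (Tuple.sort q)) = σ⁻¹ := by
      refine Equiv.ext fun w => ?_
      have h1 := congrFun heqfun (Fin.rev w)
      have h2 := hqinj h1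
      simpa [Equiv.trans_apply, Fin.rev_rev] using h2
    have hfst : (Fin.revPerm.trans (Tuple.sort q))⁻¹ = σ := by rw [hperm, inv_inv]
    have hsnd : (fun s => q (Tuple.sort q (Fin.rev s))) = p := by
      funext s
      have h1 : Tuple.sort q (Fin.rev s) = σ⁻¹ s := by
        have := congrFun (congrArg (fun (e : Equiv.Perm (Fin k)) => (e : Fin k → Fin k)) hperm) s
        simpa [Equiv.trans_apply] using this
      rw [h1, hq]
      simp [Equiv.apply_symm_apply]
    exact Sigma.ext hfst (heq_of_eq hsnd)
  · intro u hu
    dsimp only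
    funext w
    have hw := Equiv.apply_symm_apply (Fin.revPerm.trans (Tuple.sort u)) w
    exact congrArg u hw
  · rintro ⟨σ, p⟩ _
    dsimp only
    have he := Equiv.prod_comp σ (fun s => Φ (σ⁻¹ s) (p s))
    rw [← he]
    exact Finset.prod_congr rfl fun s _ => by simp [Equiv.symm_apply_apply]

end PermSum

section Assembly

open Finset

lemma bridge (k n : ℕ) (Φ : Fin k → ℕ → ℂ) :
    (∑ q ∈ (Fintype.piFinset fun _ : Fin k => Finset.Icc 1 n).filter
        (fun q => Function.Injective q), ∏ s, Φ s (q s))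
    = Ip (Finset.Icc 1 n) (univ : Finset (Fin k)) Φ := by
  classical
  rw [Ip, Finset.sum_filter]
  refine Finset.sum_bij' (fun q (_ : q ∈ Fintype.piFinset fun _ : Fin k => Finset.Icc 1 n) =>
      fun i (_ : i ∈ (univ : Finset (Fin k))) => q i)
    (fun p _ => fun i => p i (mem_univ i)) ?_ ?_ ?_ ?_ ?_
  · intro q hq
    rw [Finset.mem_pi]
    intro i _
    exact Fintype.mem_piFinset.1 hq i
  · intro p hp
    rw [Fintype.mem_piFinset]
    intro i
    exact Finset.mem_pi.1 hp i (mem_univ i)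
  · intro q _; rfl
  · intro p _; rfl
  · intro q _
    dsimp only
    refine if_congr ?_ ?_ rfl
    · constructor
      · intro h i _ j _ hij
        exact h hij
      · intro h u v huv
        exact h u (mem_univ u) v (mem_univ v) huv
    · exact (Finset.prod_attach univ (fun s => Φ s (q s))).symm

end Assembly

/-- Symmetric combinations of the strict sums `A` in terms of length-one sums. -/
theorem symmetric_A (r : ℕ) (hr : 0 < r) (n : ℕ) (hn : 0 < n) (k : ℕ)
    (a : Fin k → QLetter r) (hpos : ∀ s, 0 < (a s).1) :
    (∑ σ : Equiv.Perm (Fin k), Aword r n (List.ofFn fun s => a (σ⁻¹ s))) =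
      ∑ P : Finpartition (Finset.univ : Finset (Fin k)),
        ((-1 : ℂ) ^ (k - P.parts.card) * ∏ B ∈ P.parts, (Nat.factorial (B.card - 1) : ℂ)) *
          ∏ B ∈ P.parts, Aword r n [(∑ i ∈ B, (a i).1, ∑ i ∈ B, (a i).2)] := by
  classical
  calc (∑ σ : Equiv.Perm (Fin k), Aword r n (List.ofFn fun s => a (σ⁻¹ s)))
      = ∑ σ : Equiv.Perm (Fin k),
          ∑ p ∈ (Fintype.piFinset fun _ : Fin k => Finset.Icc 1 n).filter
            (fun p => ∀ i j : Fin k, i < j → p j < p i),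
          ∏ s, phiL r (a (σ⁻¹ s)) (p s) :=
        Finset.sum_congr rfl fun σ _ => Aexpand r k (fun s => a (σ⁻¹ s)) n
    _ = ∑ q ∈ (Fintype.piFinset fun _ : Fin k => Finset.Icc 1 n).filter
          (fun q => Function.Injective q), ∏ s, phiL r (a s) (q s) :=
        perm_sum k n (fun s => phiL r (a s))
    _ = Ip (Finset.Icc 1 n) (univ : Finset (Fin k)) (fun s => phiL r (a s)) :=
        bridge k n (fun s => phiL r (a s))
    _ = Pp (Finset.Icc 1 n) (univ : Finset (Fin k)) (fun s => phiL r (a s)) :=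
        Ip_eq_Pp (Finset.Icc 1 n) univ (fun s => phiL r (a s))
    _ = ∑ P : Finpartition (Finset.univ : Finset (Fin k)),
        ((-1 : ℂ) ^ (k - P.parts.card) * ∏ B ∈ P.parts, (Nat.factorial (B.card - 1) : ℂ)) *
          ∏ B ∈ P.parts, Aword r n [(∑ i ∈ B, (a i).1, ∑ i ∈ B, (a i).2)] := ?_
  rw [Pp]
  refine Finset.sum_congr rfl fun P _ => ?_
  have hA : ∀ B ∈ P.parts, wB (Finset.Icc 1 n) (fun s => phiL r (a s)) B =
      ((-1 : ℂ) ^ (B.card - 1) * (Nat.factorial (B.card - 1) : ℂ)) *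
        Aword r n [(∑ i ∈ B, (a i).1, ∑ i ∈ B, (a i).2)] := by
    intro B _
    rw [wB, Aword_single, Finset.sum_congr rfl (fun v _ => prod_phiL hr B a v)]
  rw [Finset.prod_congr rfl hA, Finset.prod_mul_distrib, Finset.prod_mul_distrib]
  have hsign : (∏ B ∈ P.parts, (-1 : ℂ) ^ (B.card - 1)) = (-1 : ℂ) ^ (k - P.parts.card) := by
    rw [Finset.prod_pow_eq_pow_sum]
    congr 1
    have hcard : ∑ B ∈ P.parts, B.card = k := by
      rw [P.sum_card_parts, Finset.card_univ, Fintype.card_fin]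
    have hone : ∀ B ∈ P.parts, 1 ≤ B.card :=
      fun B hB => Finset.card_pos.2 (P.nonempty_of_mem_parts hB)
    have hsum : ∑ B ∈ P.parts, (B.card - 1) + ∑ _B ∈ P.parts, 1 = ∑ B ∈ P.parts, B.card := by
      rw [← Finset.sum_add_distrib]
      exact Finset.sum_congr rfl fun B hB => Nat.sub_add_cancel (hone B hB)
    rw [Finset.sum_const, smul_eq_mul, mul_one] at hsum
    omega
  rw [hsign]
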